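/- (Cocycle form of Lemma 3.2 of the paper.) Assume $B + E = A$ and that $B \cap E$ is finite. Let $q$ be a prime number and let $c : G \to B$ be a 1-cocycle with values in $B$ such that: (i) $c$ is a coboundary in $A$ (there exists $a \in A$ with $c(g) = g\cdot a - a$ for all $g$); (ii) $c$ is not a coboundary in $B$; and (iii) $q\cdot c$ is a coboundary in $B$. Then $q$ divides the cardinality $|B \cap E|$. -/

import Mathlib

/-! Write `a = b₀ + e₀` with `b₀ ∈ B`, `e₀ ∈ E`. Then `c - δb₀ = δe₀` takes values in `B ∩ E`,
so it is killed by `n = |B ∩ E|` (a junk `0` if `B ∩ E` is infinite), i.e. `n • c` is a coboundary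
in `B`. If `q ∤ n`, then `q` and `n` are coprime and, `q • c` being a coboundary in `B` as well,
a Bézout combination exhibits `c` itself as a coboundary in `B`. -/

theorem AddSubgroup.card_nsmul_eq_zero_of_mem {A : Type*} [AddGroup A] (H : AddSubgroup A)
    {x : A} (hx : x ∈ H) : Nat.card H • x = 0 :=
  congrArg Subtype.val (card_nsmul_eq_zero' (G := H) (x := ⟨x, hx⟩))

section Coboundary

variable {G A : Type*} [Group G] [AddCommGroup A] [DistribMulAction G A]

theorem zsmul_smul_sub_self (z : ℤ) (g : G) (b : A) :
    z • (g • b - b) = g • (z • b) - z • b := by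
  rw [smul_sub, smul_comm]

theorem exists_coboundary_of_coprime (S : AddSubgroup A) {m n : ℕ} (hmn : m.Coprime n)
    {c : G → A} (hm : ∃ b ∈ S, ∀ g : G, m • c g = g • b - b)
    (hn : ∃ b ∈ S, ∀ g : G, n • c g = g • b - b) :
    ∃ b ∈ S, ∀ g : G, c g = g • b - b := by
  obtain ⟨u, v, huv⟩ := Nat.isCoprime_iff_coprime.mpr hmn
  obtain ⟨b₁, hb₁, h₁⟩ := hm
  obtain ⟨b₂, hb₂, h₂⟩ := hn
  refine ⟨u • b₁ + v • b₂, add_mem (S.zsmul_mem hb₁ u) (S.zsmul_mem hb₂ v), fun g => ?_⟩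
  calc c g = u • ((m : ℤ) • c g) + v • ((n : ℤ) • c g) := by
        rw [smul_smul, smul_smul, ← add_smul, huv, one_smul]
    _ = u • (g • b₁ - b₁) + v • (g • b₂ - b₂) := by
        rw [natCast_zsmul, natCast_zsmul, h₁, h₂]
    _ = g • (u • b₁ + v • b₂) - (u • b₁ + v • b₂) := by
        rw [zsmul_smul_sub_self, zsmul_smul_sub_self, smul_add]
        abel

theorem exists_sub_coboundary_mem_inf {B E : AddSubgroup A}
    (hB : ∀ (g : G), ∀ x ∈ B, g • x ∈ B) (hE : ∀ (g : G), ∀ x ∈ E, g • x ∈ E)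
    (hBE : B ⊔ E = ⊤) {c : G → A} (hcB : ∀ g : G, c g ∈ B)
    (hcobA : ∃ a : A, ∀ g : G, c g = g • a - a) :
    ∃ b₀ ∈ B, ∀ g : G, c g - (g • b₀ - b₀) ∈ B ⊓ E := by
  obtain ⟨a, ha⟩ := hcobA
  obtain ⟨b₀, hb₀, e₀, he₀, rfl⟩ := AddSubgroup.mem_sup.mp (hBE ▸ AddSubgroup.mem_top a)
  refine ⟨b₀, hb₀, fun g =>
    AddSubgroup.mem_inf.mpr ⟨B.sub_mem (hcB g) (B.sub_mem (hB g b₀ hb₀) hb₀), ?_⟩⟩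
  have hdiff : c g - (g • b₀ - b₀) = g • e₀ - e₀ := by
    rw [ha g, smul_add]
    abel
  exact hdiff ▸ E.sub_mem (hE g e₀ he₀) he₀

end Coboundary

theorem stmt6_general {G A : Type*} [Group G] [AddCommGroup A] [DistribMulAction G A]
    (B E : AddSubgroup A)
    (hB : ∀ (g : G), ∀ x ∈ B, g • x ∈ B)
    (hE : ∀ (g : G), ∀ x ∈ E, g • x ∈ E)
    (hBE : B ⊔ E = ⊤)
    (q : ℕ) (hq : q.Prime)
    (c : G → A)
    (hcB : ∀ g : G, c g ∈ B)
    (hcobA : ∃ a : A, ∀ g : G, c g = g • a - a)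
    (hncobB : ¬ ∃ b ∈ B, ∀ g : G, c g = g • b - b)
    (hqcobB : ∃ b ∈ B, ∀ g : G, q • c g = g • b - b) :
    q ∣ Nat.card ↥(B ⊓ E) := by
  by_contra hndvd
  set n := Nat.card ↥(B ⊓ E)
  obtain ⟨b₀, hb₀, hd⟩ := exists_sub_coboundary_mem_inf hB hE hBE hcB hcobA
  have hncob : ∃ b ∈ B, ∀ g : G, n • c g = g • b - b := by
    refine ⟨n • b₀, B.nsmul_mem hb₀ n, fun g => ?_⟩
    have hkill := (B ⊓ E).card_nsmul_eq_zero_of_mem (hd g)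
    rw [nsmul_sub, sub_eq_zero, nsmul_sub, smul_comm] at hkill
    exact hkill
  exact hncobB (exists_coboundary_of_coprime B (hq.coprime_iff_not_dvd.mpr hndvd) hqcobB hncob)

/-- cocycle form of Lemma 3.2 of the paper.  Let `G` act on an
abelian group `A` by additive automorphisms and let `B`, `E` be `G`-stable subgroups
with `B + E = A` and `B ∩ E` finite.  Let `q` be a prime and `c : G → A` a 1-cocycle
with values in `B` such that (i) `c` is a coboundary in `A`, (ii) `c` is not a
coboundary in `B`, and (iii) `q • c` is a coboundary in `B`.  Then `q ∣ |B ∩ E|`. -/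
theorem stmt6 {G A : Type*} [Group G] [AddCommGroup A] [DistribMulAction G A]
    (B E : AddSubgroup A)
    (hB : ∀ (g : G), ∀ x ∈ B, g • x ∈ B)
    (hE : ∀ (g : G), ∀ x ∈ E, g • x ∈ E)
    (hBE : B ⊔ E = ⊤)
    (hfin : Finite ↥(B ⊓ E))
    (q : ℕ) (hq : q.Prime)
    (c : G → A)
    (hcB : ∀ g : G, c g ∈ B)
    (hcoc : ∀ g h : G, c (g * h) = c g + g • c h)
    (hcobA : ∃ a : A, ∀ g : G, c g = g • a - a)
    (hncobB : ¬ ∃ b ∈ B, ∀ g : G, c g = g • b - b)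
    (hqcobB : ∃ b ∈ B, ∀ g : G, q • c g = g • b - b) :
    q ∣ Nat.card ↥(B ⊓ E) :=
  stmt6_general B E hB hE hBE q hq c hcB hcobA hncobB hqcobB
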